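/- arXiv:2411.09954 — 2 statements merged into one kernel-verified Lean document; each statement's English description precedes it below -/
import Mathlib

section
/- If a directed graph G = (V, E) with leader set L ⊆ V satisfies that every nonempty subset S ⊆ V \ L contains at least one node with at least 2f+1 in-neighbors outside S (strong (2f+1)-robustness w.r.t. L), then for every subset F ⊆ V with |F| ≤ f, the induced subgraph on H = V \ F satisfies: every nonempty subset S ⊆ H \ L contains at least one node with at least f+1 in-neighbors in H outside S. -/
open Finset

/-- If a directed graph with leader set `L` satisfies strong
`(2f+1)`-robustness w.r.t. `L` (every nonempty subset `S` of non-leaders contains a node with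
at least `2f+1` in-neighbors outside `S`), then for every `F` with `|F| ≤ f`, the induced
subgraph on `V \ F` satisfies: every nonempty `S ⊆ (V \ F) \ L` contains a node with at
least `f+1` in-neighbors in `V \ F` outside `S`. -/
theorem strongly_robust_implies_robust_following
    {V : Type*} [Fintype V] [DecidableEq V]
    (E : V → V → Prop) (L : Finset V) (f : ℕ)
    (h : ∀ S : Finset V, S ⊆ univ \ L → S.Nonempty →
      ∃ i ∈ S, 2 * f + 1 ≤ ({j | j ∉ S ∧ E j i} : Set V).ncard) :
    ∀ F : Finset V, F.card ≤ f →
      ∀ S : Finset V, S ⊆ (univ \ F) \ L → S.Nonempty →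
        ∃ i ∈ S, f + 1 ≤ ({j | j ∈ (univ \ F : Finset V) ∧ j ∉ S ∧ E j i} : Set V).ncard := by
  intro F hF S hS hne
  obtain ⟨i, hi, hcard⟩ := h S (fun x hx => by
    have := hS hx
    simp only [mem_sdiff, mem_univ, true_and] at this ⊢
    exact this.2) hne
  refine ⟨i, hi, ?_⟩
  have hsub : ({j | j ∉ S ∧ E j i} : Set V) \ ↑F ⊆
      ({j | j ∈ (univ \ F : Finset V) ∧ j ∉ S ∧ E j i} : Set V) := by
    intro x hx
    simp only [Set.mem_diff, Set.mem_setOf_eq, Finset.coe_univ] at hx ⊢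
    exact ⟨by simpa using hx.2, hx.1.1, hx.1.2⟩
  have h1 : ({j | j ∉ S ∧ E j i} : Set V).ncard ≤
      (({j | j ∉ S ∧ E j i} : Set V) \ ↑F).ncard + (↑F : Set V).ncard :=
    Set.ncard_le_ncard_diff_add_ncard _ _ (F.finite_toSet)
  have h2 : (↑F : Set V).ncard ≤ f := by
    rw [Set.ncard_coe_finset]; exact hF
  have h3 := Set.ncard_le_ncard hsub (Set.toFinite _)
  omega
end

section
/- Under the position recursion x[k+1] = (2-Tβ)x[k] - (1-Tβ)x[k-1] + (T²/2)Σ_j a_j[k](y_j[k] - x[k]) + (T²/2)Σ_j a_j[k-1](y_j[k-1] - x[k-1]), with convex weights Σ_j a_j[k] = 1, a_j[k] ≥ 0, and the gain condition 1 + T²/2 ≤ βT ≤ 2 - T²/2, the coefficients of x[k], x[k-1], and of all y_j[k], y_j[k-1] (after expansion) are nonnegative and sum to 1; consequently x[k+1] lies in the convex hull of { x[k], x[k-1] } ∪ { y_j[k] } ∪ { y_j[k-1] }. -/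
/-- Under the position recursion of the MDP-MSR algorithm with convex
weights and the gain condition `1 + T²/2 ≤ βT ≤ 2 - T²/2`, the coefficients of `x[k]`,
`x[k-1]`, and of all `y_j[k]`, `y_j[k-1]` after expansion are nonnegative and sum to 1;
consequently `x[k+1]` is a convex combination of
`{x[k], x[k-1]} ∪ {y_j[k]} ∪ {y_j[k-1]}`. -/
theorem position_recursion_convex_combination
    {J : Type*} [Fintype J] (T β : ℝ) (hT : 0 < T)
    (hgain1 : 1 + T ^ 2 / 2 ≤ β * T) (hgain2 : β * T ≤ 2 - T ^ 2 / 2)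
    (a1 a2 : J → ℝ) (ha1 : ∀ j, 0 ≤ a1 j) (ha2 : ∀ j, 0 ≤ a2 j)
    (hs1 : ∑ j, a1 j = 1) (hs2 : ∑ j, a2 j = 1)
    (x0 x1 xnext : ℝ) (y1 y2 : J → ℝ)
    (hx : xnext = (2 - T * β) * x1 - (1 - T * β) * x0
      + T ^ 2 / 2 * ∑ j, a2 j * (y2 j - x1)
      + T ^ 2 / 2 * ∑ j, a1 j * (y1 j - x0)) :
    0 ≤ 2 - T * β - T ^ 2 / 2 ∧
    0 ≤ T * β - 1 - T ^ 2 / 2 ∧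
    (∀ j, 0 ≤ T ^ 2 / 2 * a1 j) ∧
    (∀ j, 0 ≤ T ^ 2 / 2 * a2 j) ∧
    (2 - T * β - T ^ 2 / 2) + (T * β - 1 - T ^ 2 / 2)
      + (∑ j, T ^ 2 / 2 * a1 j) + (∑ j, T ^ 2 / 2 * a2 j) = 1 ∧
    xnext = (2 - T * β - T ^ 2 / 2) * x1 + (T * β - 1 - T ^ 2 / 2) * x0
      + (∑ j, (T ^ 2 / 2 * a2 j) * y2 j) + (∑ j, (T ^ 2 / 2 * a1 j) * y1 j) := by
  have hsq : 0 ≤ T ^ 2 / 2 := by positivity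
  refine ⟨by linarith [mul_comm T β], by linarith [mul_comm T β],
    fun j => mul_nonneg hsq (ha1 j), fun j => mul_nonneg hsq (ha2 j), ?_, ?_⟩
  · rw [← Finset.mul_sum, ← Finset.mul_sum, hs1, hs2]; ring
  · rw [hx]
    have e2 : ∑ j, a2 j * (y2 j - x1) = (∑ j, a2 j * y2 j) - x1 := by
      simp [mul_sub, Finset.sum_sub_distrib, ← Finset.sum_mul, hs2]
    have e1 : ∑ j, a1 j * (y1 j - x0) = (∑ j, a1 j * y1 j) - x0 := by
      simp [mul_sub, Finset.sum_sub_distrib, ← Finset.sum_mul, hs1]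
    rw [e1, e2]
    have : ∀ (a y : J → ℝ), ∑ j, (T ^ 2 / 2 * a j) * y j = T ^ 2 / 2 * ∑ j, a j * y j := by
      intro a y; rw [Finset.mul_sum]; congr 1; ext j; ring
    rw [this a2 y2, this a1 y1]; ring
end
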